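/- Let N_{K₁}, N_{K₂} be neighborhood filters in a coarse proximity space (X,B,b) with closed centers K₁, K₂ ⊆ UX. Then K₁ ⊆ int(K₂) if and only if there exists A ∈ N_{K₁} such that A ⊑ B for all B ∈ N_{K₂}. -/

import Mathlib

open Set

universe u
variable {X : Type u}

/-- The axioms of a coarse proximity structure: a bornology `B` (contains singletons,
closed under subsets and finite unions) and a relation `b` satisfying symmetry,
unboundedness of related sets, relatedness of sets with unbounded intersection,
the union axiom, and the strong axiom. -/
structure IsCoarseProximity (B : Set (Set X)) (b : Set X → Set X → Prop) : Prop where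
  singleton_mem : ∀ x : X, {x} ∈ B
  subset_mem : ∀ A C : Set X, A ∈ B → C ⊆ A → C ∈ B
  union_mem : ∀ A C : Set X, A ∈ B → C ∈ B → A ∪ C ∈ B
  symm : ∀ A C : Set X, b A C → b C A
  unbounded_of_rel : ∀ A C : Set X, b A C → A ∉ B ∧ C ∉ B
  rel_of_inter : ∀ A C : Set X, A ∩ C ∉ B → b A C
  union_iff : ∀ A C D : Set X, b (A ∪ C) D ↔ b A D ∨ b C D
  strong : ∀ A C : Set X, ¬ b A C → ∃ E : Set X, ¬ b A E ∧ ¬ b (univ \ E) C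

/-- A coarse proximity space structure on `X`. -/
structure CoarseProximity (X : Type u) where
  B : Set (Set X)
  b : Set X → Set X → Prop
  isCP : IsCoarseProximity B b

/-- The weak asymptotic resemblance induced by a coarse proximity. -/
def phi (cp : CoarseProximity X) (A C : Set X) : Prop :=
  (∀ C' ⊆ C, C' ∉ cp.B → cp.b A C') ∧ (∀ A' ⊆ A, A' ∉ cp.B → cp.b A' C)

/-- The discrete extension of the coarse proximity `b`. -/
def deltaExt (cp : CoarseProximity X) (A C : Set X) : Prop :=
  (A ∩ C).Nonempty ∨ cp.b A C

/-- A cluster in the proximity space given by the discrete extension of `b`: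
any two members are close, any set close to all members is a member, and a union
belongs only if one of the pieces does. -/
structure IsCluster (cp : CoarseProximity X) (σ : Set (Set X)) : Prop where
  close : ∀ A ∈ σ, ∀ C ∈ σ, deltaExt cp A C
  mem_of_close : ∀ C : Set X, (∀ A ∈ σ, deltaExt cp C A) → C ∈ σ
  union_cases : ∀ A C : Set X, A ∪ C ∈ σ → A ∈ σ ∨ C ∈ σ

/-- The boundary `𝒰X` of the coarse proximity space: clusters (in the Smirnov
compactification of the discrete extension) containing no bounded set. -/
def UX (cp : CoarseProximity X) : Set (Set (Set X)) :=
  {σ | IsCluster cp σ ∧ ∀ A ∈ σ, A ∉ cp.B}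

/-- The trace `A' = cl_𝔛(A) ∩ 𝒰X` of `A ⊆ X` in the boundary; a cluster of the
boundary lies in the closure of `A` in the Smirnov compactification iff `A` is a
member of the cluster. -/
def trace (cp : CoarseProximity X) (A : Set X) : Set (Set (Set X)) :=
  {σ ∈ UX cp | A ∈ σ}

/-- Relative closure in a subspace `Y` of the Smirnov compactification: a cluster
`σ ∈ Y` lies in the closure of `S ⊆ Y` iff every subset of `X` absorbing `S`
(i.e. belonging to every cluster of `S`) belongs to `σ`. -/
def clRel (Y S : Set (Set (Set X))) : Set (Set (Set X)) :=
  {σ ∈ Y | ∀ C : Set X, (∀ τ ∈ S, C ∈ τ) → C ∈ σ}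

/-- A subset of `Y` is relatively closed iff it contains its relative closure. -/
def relClosed (Y K : Set (Set (Set X))) : Prop :=
  K ⊆ Y ∧ clRel Y K ⊆ K

/-- Interior in the boundary `𝒰X`. -/
def intU (cp : CoarseProximity X) (S : Set (Set (Set X))) : Set (Set (Set X)) :=
  UX cp \ clRel (UX cp) (UX cp \ S)

/-- Closed subsets of the boundary `𝒰X`. -/
def IsClosedU (cp : CoarseProximity X) (K : Set (Set (Set X))) : Prop :=
  relClosed (UX cp) K

/-- Open subsets of the boundary `𝒰X`. -/
def IsOpenU (cp : CoarseProximity X) (U : Set (Set (Set X))) : Prop :=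
  U ⊆ UX cp ∧ IsClosedU cp (UX cp \ U)

/-- `A ⊑ B` iff every set coarsely close to `A` is coarsely close to `B`. -/
def sqsub (cp : CoarseProximity X) (A C : Set X) : Prop :=
  ∀ D : Set X, cp.b A D → cp.b C D

/-- `A ≪ B`: `B` is a coarse neighborhood of `A`. -/
def ll (cp : CoarseProximity X) (A C : Set X) : Prop :=
  ¬ cp.b A (Set.univ \ C)

/-- `A ≪_w B` iff there is `C` with `A ≪ C ⊑ B`. -/
def llw (cp : CoarseProximity X) (A C : Set X) : Prop :=
  ∃ D : Set X, ll cp A D ∧ sqsub cp D C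

/-- The preorder `A ⪯ B` iff `A' ⊆ int(B')` or `A' = B'`. -/
def preRel (cp : CoarseProximity X) (A C : Set X) : Prop :=
  trace cp A ⊆ intU cp (trace cp C) ∨ trace cp A = trace cp C

/-- A neighborhood filter in a coarse proximity space. -/
structure IsNbhdFilter (cp : CoarseProximity X) (N : Set (Set X)) : Prop where
  nonempty : N.Nonempty
  directed : ∀ A ∈ N, ∀ C ∈ N, ∃ D ∈ N, preRel cp D A ∧ preRel cp D C
  upward : ∀ A ∈ N, ∀ C : Set X, preRel cp A C → C ∈ N
  refine : ∀ A ∈ N, ∃ C ∈ N, trace cp C ⊆ intU cp (trace cp A)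

/-- The neighborhood filter `N_K = {A ⊆ X : K ⊆ int(A')}` of a closed `K ⊆ 𝒰X`. -/
def nbhdFilter (cp : CoarseProximity X) (K : Set (Set (Set X))) : Set (Set X) :=
  {A : Set X | K ⊆ intU cp (trace cp A)}


section Aux
variable {cp : CoarseProximity X}

lemma b_symm {A C : Set X} (h : cp.b A C) : cp.b C A := cp.isCP.symm _ _ h

lemma b_mono_right {A C D : Set X} (h : cp.b A C) (hCD : C ⊆ D) : cp.b A D := by
  have h1 : cp.b (C ∪ (D \ C)) A := (cp.isCP.union_iff _ _ _).2 (Or.inl (b_symm h))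
  rw [Set.union_diff_cancel hCD] at h1
  exact b_symm h1

lemma b_mono_left {A C D : Set X} (h : cp.b A C) (hAD : A ⊆ D) : cp.b D C :=
  b_symm (b_mono_right (b_symm h) hAD)

lemma not_b_left {A C : Set X} (hA : A ∈ cp.B) : ¬ cp.b A C :=
  fun h => (cp.isCP.unbounded_of_rel _ _ h).1 hA

lemma not_b_right {A C : Set X} (hC : C ∈ cp.B) : ¬ cp.b A C :=
  fun h => (cp.isCP.unbounded_of_rel _ _ h).2 hC

lemma delta_symm {A C : Set X} (h : deltaExt cp A C) : deltaExt cp C A := by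
  rcases h with h | h
  · exact Or.inl (by rwa [Set.inter_comm])
  · exact Or.inr (b_symm h)

lemma delta_mono_right {A C D : Set X} (h : deltaExt cp A C) (hCD : C ⊆ D) :
    deltaExt cp A D := by
  rcases h with h | h
  · exact Or.inl (h.mono (Set.inter_subset_inter_right _ hCD))
  · exact Or.inr (b_mono_right h hCD)

lemma delta_mono_left {A C D : Set X} (h : deltaExt cp A C) (hAD : A ⊆ D) :
    deltaExt cp D C :=
  delta_symm (delta_mono_right (delta_symm h) hAD)

lemma delta_union_iff {A C D : Set X} :
    deltaExt cp (A ∪ C) D ↔ deltaExt cp A D ∨ deltaExt cp C D := by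
  unfold deltaExt
  rw [Set.union_inter_distrib_right, Set.union_nonempty, cp.isCP.union_iff]
  tauto

lemma ef {A C : Set X} (h : ¬ deltaExt cp A C) :
    ∃ E : Set X, ¬ deltaExt cp A E ∧ ¬ deltaExt cp Eᶜ C := by
  rw [deltaExt, not_or, Set.not_nonempty_iff_eq_empty] at h
  obtain ⟨hAC, hb⟩ := h
  obtain ⟨E₀, hbE₀, hbc⟩ := cp.isCP.strong A C hb
  rw [← Set.compl_eq_univ_diff] at hbc
  refine ⟨(E₀ ∪ C) \ A, ?_, ?_⟩
  · rintro (hne | hb2)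
    · exact hne.ne_empty (Set.inter_diff_self A (E₀ ∪ C))
    · have : cp.b A (E₀ ∪ C) := b_mono_right hb2 Set.diff_subset
      rcases (cp.isCP.union_iff E₀ C A).1 (b_symm this) with h' | h'
      · exact hbE₀ (b_symm h')
      · exact hb (b_symm h')
  · rintro (hne | hb2)
    · obtain ⟨x, hx1, hx2⟩ := hne
      have hxA : x ∉ A := fun hxA => (Set.eq_empty_iff_forall_notMem.1 hAC x) ⟨hxA, hx2⟩
      exact hx1 ⟨Or.inr hx2, hxA⟩
    · have hsub : ((E₀ ∪ C) \ A)ᶜ ⊆ E₀ᶜ ∪ A := by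
        intro x hx
        simp only [Set.mem_compl_iff, Set.mem_diff, not_and, not_not] at hx
        by_cases hxA : x ∈ A
        · exact Or.inr hxA
        · exact Or.inl fun hxE₀ => hxA (hx (Or.inl hxE₀))
      have : cp.b (E₀ᶜ ∪ A) C := b_mono_left hb2 hsub
      rcases (cp.isCP.union_iff _ _ _).1 this with h' | h'
      · exact hbc h'
      · exact hb h'

lemma cluster_nonempty {σ : Set (Set X)} (h : IsCluster cp σ) : σ.Nonempty := by
  by_contra hne
  rw [Set.not_nonempty_iff_eq_empty] at hne
  have := h.mem_of_close ∅ (by simp [hne])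
  simp [hne] at this

lemma cluster_upward {σ : Set (Set X)} (h : IsCluster cp σ) {A C : Set X}
    (hA : A ∈ σ) (hAC : A ⊆ C) : C ∈ σ :=
  h.mem_of_close C fun D hD => delta_mono_left (h.close A hA D hD) hAC

lemma univ_mem_cluster {σ : Set (Set X)} (h : IsCluster cp σ) : Set.univ ∈ σ := by
  obtain ⟨A, hA⟩ := cluster_nonempty h
  exact cluster_upward h hA (Set.subset_univ A)

lemma compl_mem_of_not_mem {σ : Set (Set X)} (h : IsCluster cp σ) {C : Set X}
    (hC : C ∉ σ) : Cᶜ ∈ σ := by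
  have hu : C ∪ Cᶜ ∈ σ := by rw [Set.union_compl_self]; exact univ_mem_cluster h
  rcases h.union_cases _ _ hu with h' | h'
  · exact absurd h' hC
  · exact h'

lemma cluster_b {σ : Set (Set X)} (hσ : σ ∈ UX cp) {A C : Set X}
    (hA : A ∈ σ) (hC : C ∈ σ) : cp.b A C := by
  by_cases hb : A ∩ C ∈ cp.B
  · have hAu : (A ∩ C) ∪ (A \ C) ∈ σ := by rw [Set.inter_union_diff]; exact hA
    rcases hσ.1.union_cases _ _ hAu with h' | h'
    · exact absurd hb (hσ.2 _ h')
    · have hd := hσ.1.close _ h' _ hC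
      rcases hd with hne | hb'
      · rw [Set.diff_inter_self] at hne; exact absurd rfl hne.ne_empty
      · exact b_mono_left hb' Set.diff_subset
  · exact cp.isCP.rel_of_inter _ _ hb

lemma empty_not_mem_cluster [Nonempty X] {σ : Set (Set X)} (hσ : σ ∈ UX cp) :
    ∅ ∉ σ := by
  intro h
  obtain ⟨x⟩ := ‹Nonempty X›
  exact hσ.2 ∅ h (cp.isCP.subset_mem {x} ∅ (cp.isCP.singleton_mem x) (Set.empty_subset _))

lemma mem_of_sUnion_mem {σ : Set (Set X)} (h : IsCluster cp σ) (h0 : ∅ ∉ σ)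
    (L : Finset (Set X)) (hL : ⋃₀ ↑L ∈ σ) : ∃ S ∈ L, S ∈ σ := by
  classical
  induction L using Finset.induction_on with
  | empty => simp at hL; exact absurd hL h0
  | insert a L hni ih =>
    rw [Finset.coe_insert, Set.sUnion_insert] at hL
    rcases h.union_cases _ _ hL with h' | h'
    · exact ⟨a, Finset.mem_insert_self a L, h'⟩
    · obtain ⟨S, hS1, hS2⟩ := ih h'
      exact ⟨S, Finset.mem_insert_of_mem hS1, hS2⟩

lemma trace_mono {A C : Set X} (h : A ⊆ C) : trace cp A ⊆ trace cp C :=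
  fun σ hσ => ⟨hσ.1, cluster_upward hσ.1.1 hσ.2 h⟩

lemma subset_clRel {Y S : Set (Set (Set X))} (h : S ⊆ Y) : S ⊆ clRel Y S :=
  fun σ hσ => ⟨h hσ, fun C hC => hC σ hσ⟩

lemma clRel_mono {Y S T : Set (Set (Set X))} (h : S ⊆ T) : clRel Y S ⊆ clRel Y T :=
  fun σ hσ => ⟨hσ.1, fun C hC => hσ.2 C fun τ hτ => hC τ (h hτ)⟩

lemma intU_mono {S T : Set (Set (Set X))} (h : S ⊆ T) : intU cp S ⊆ intU cp T :=
  fun σ hσ => ⟨hσ.1, fun hc => hσ.2 (clRel_mono (Set.diff_subset_diff_right h) hc)⟩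

lemma intU_subset {S : Set (Set (Set X))} : intU cp S ⊆ S := by
  intro σ hσ
  by_contra hs
  exact hσ.2 (subset_clRel Set.diff_subset ⟨hσ.1, hs⟩)

lemma compl_mem_of_not_intU {C : Set X} {σ : Set (Set X)} (hσ : σ ∈ UX cp)
    (h : σ ∉ intU cp (trace cp C)) : Cᶜ ∈ σ := by
  have hcl : σ ∈ clRel (UX cp) (UX cp \ trace cp C) := by
    by_contra hc; exact h ⟨hσ, hc⟩
  exact hcl.2 Cᶜ fun τ hτ =>
    compl_mem_of_not_mem hτ.1.1 fun hCτ => hτ.2 ⟨hτ.1, hCτ⟩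

lemma trace_subset_intU {A C : Set X} (h : ¬ deltaExt cp A Cᶜ) :
    trace cp A ⊆ intU cp (trace cp C) := by
  intro σ hσ
  by_contra hi
  have h1 : Cᶜ ∈ σ := compl_mem_of_not_intU hσ.1 hi
  exact h (hσ.1.1.close _ hσ.2 _ h1)

lemma sep_pair {A G : Set X} (h : ¬ deltaExt cp G A) :
    ∃ C : Set X, ¬ deltaExt cp G Cᶜ ∧ ¬ deltaExt cp C A := by
  obtain ⟨E, h1, h2⟩ := ef h
  exact ⟨Eᶜ, by rwa [compl_compl], h2⟩

lemma exists_mem_not_delta {σ : Set (Set X)} (h : IsCluster cp σ) {G : Set X}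
    (hG : G ∉ σ) : ∃ A ∈ σ, ¬ deltaExt cp G A := by
  by_contra hc
  push_neg at hc
  exact hG (h.mem_of_close G hc)

lemma exists_nbhd_avoid {K : Set (Set (Set X))} {σ : Set (Set X)}
    (hK : IsClosedU cp K) (hσ : σ ∈ UX cp) (hσK : σ ∉ K) :
    ∃ C : Set X, K ⊆ intU cp (trace cp C) ∧ C ∉ σ := by
  have hncl : σ ∉ clRel (UX cp) K := fun h => hσK (hK.2 h)
  have : ∃ G : Set X, (∀ τ ∈ K, G ∈ τ) ∧ G ∉ σ := by
    by_contra hc; push_neg at hc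
    exact hncl ⟨hσ, fun C hC => hc C hC⟩
  obtain ⟨G, hGK, hGσ⟩ := this
  obtain ⟨A, hAσ, hGA⟩ := exists_mem_not_delta hσ.1 hGσ
  obtain ⟨C, hC1, hC2⟩ := sep_pair hGA
  refine ⟨C, ?_, fun hCσ => hC2 (hσ.1.close _ hCσ _ hAσ)⟩
  intro τ hτ
  exact trace_subset_intU hC1 ⟨hK.1 hτ, hGK τ hτ⟩

def clusterOf (cp : CoarseProximity X) (𝔘 : Ultrafilter X) : Set (Set X) :=
  {C | ∀ U ∈ 𝔘, deltaExt cp C U}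

lemma clusterOf_mem_UX (𝔘 : Ultrafilter X) (hB : ∀ E ∈ cp.B, E ∉ 𝔘) :
    clusterOf cp 𝔘 ∈ UX cp := by
  have hcl : IsCluster cp (clusterOf cp 𝔘) := by
    constructor
    · intro A hA C hC
      by_contra hd
      obtain ⟨E, h1, h2⟩ := ef hd
      rcases 𝔘.mem_or_compl_mem E with hE | hE
      · exact h1 (hA E hE)
      · exact h2 (delta_symm (hC Eᶜ hE))
    · intro C hC U hU
      refine hC U fun V hV => ?_
      exact Or.inl (Filter.nonempty_of_mem (𝔘.inter_mem hU hV))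
    · intro A C hu
      by_contra hc
      push_neg at hc
      obtain ⟨U₁, hU₁, hdA⟩ : ∃ U ∈ 𝔘, ¬ deltaExt cp A U := by
        by_contra h; push_neg at h; exact hc.1 h
      obtain ⟨U₂, hU₂, hdC⟩ : ∃ U ∈ 𝔘, ¬ deltaExt cp C U := by
        by_contra h; push_neg at h; exact hc.2 h
      have hmem := hu (U₁ ∩ U₂) (𝔘.inter_mem hU₁ hU₂)
      rcases delta_union_iff.1 hmem with h' | h'
      · exact hdA (delta_mono_right h' Set.inter_subset_left)
      · exact hdC (delta_mono_right h' Set.inter_subset_right)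
  refine ⟨hcl, fun A hA hAB => ?_⟩
  have hAc : Aᶜ ∈ 𝔘 := (Ultrafilter.compl_mem_iff_notMem).2 (hB A hAB)
  rcases hA Aᶜ hAc with hne | hb
  · simp at hne
  · exact not_b_left hAB hb

lemma exists_ultra (𝒢 : Set (Set X))
    (h : ∀ L : Finset (Set X), ↑L ⊆ 𝒢 → ⋃₀ (↑L : Set (Set X)) ≠ Set.univ) :
    ∃ 𝔘 : Ultrafilter X, ∀ S ∈ 𝒢, S ∉ 𝔘 := by
  classical
  have hne : (Filter.generate (compl '' 𝒢) : Filter X).NeBot := by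
    rw [Filter.neBot_iff]
    intro hbot
    have hemp : (∅ : Set X) ∈ Filter.generate (compl '' 𝒢) := by
      rw [hbot]; exact Filter.mem_bot
    rw [Filter.mem_generate_iff] at hemp
    obtain ⟨G, hG𝒢, hGfin, hGsub⟩ := hemp
    have hGc : compl '' G ⊆ 𝒢 := by
      rintro S ⟨T, hT, rfl⟩
      obtain ⟨R, hR, rfl⟩ := hG𝒢 hT
      rwa [compl_compl]
    have hfin2 : (compl '' G).Finite := hGfin.image _
    refine h hfin2.toFinset (by rwa [Set.Finite.coe_toFinset]) ?_
    rw [Set.Finite.coe_toFinset, ← Set.compl_sInter,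
      Set.subset_empty_iff.1 hGsub, Set.compl_empty]
  refine ⟨Ultrafilter.of (Filter.generate (compl '' 𝒢)), fun S hS hSU => ?_⟩
  have hSc : Sᶜ ∈ Ultrafilter.of (Filter.generate (compl '' 𝒢)) :=
    Ultrafilter.of_le _ (Filter.mem_generate_of_mem ⟨S, hS, rfl⟩)
  exact (Ultrafilter.compl_mem_iff_notMem.1 hSc) hSU

lemma b_sUnion [Nonempty X] {D : Set X} (L : Finset (Set X))
    (h : cp.b (⋃₀ ↑L) D) : ∃ S ∈ L, cp.b S D := by
  classical
  induction L using Finset.induction_on with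
  | empty =>
    simp only [Finset.coe_empty, Set.sUnion_empty] at h
    obtain ⟨x⟩ := ‹Nonempty X›
    exact absurd h (not_b_left
      (cp.isCP.subset_mem {x} ∅ (cp.isCP.singleton_mem x) (Set.empty_subset _)))
  | insert a L hni ih =>
    rw [Finset.coe_insert, Set.sUnion_insert] at h
    rcases (cp.isCP.union_iff _ _ _).1 h with h' | h'
    · exact ⟨a, Finset.mem_insert_self a L, h'⟩
    · obtain ⟨S, hS1, hS2⟩ := ih h'
      exact ⟨S, Finset.mem_insert_of_mem hS1, hS2⟩

lemma exists_cluster_pair [Nonempty X] {A D : Set X} (h : cp.b A D) :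
    ∃ σ ∈ UX cp, A ∈ σ ∧ D ∈ σ := by
  classical
  have hside : ∀ L : Finset (Set X), ↑L ⊆ {S | ¬ cp.b (A ∩ S) D} →
      ⋃₀ (↑L : Set (Set X)) ≠ Set.univ := by
    intro L hL hun
    have hA : cp.b (⋃₀ ↑(L.image (fun S => A ∩ S))) D := by
      have : ⋃₀ ↑(L.image (fun S => A ∩ S)) = A := by
        rw [Finset.coe_image, Set.sUnion_image, ← Set.inter_iUnion₂]
        rw [← Set.sUnion_eq_biUnion, hun, Set.inter_univ]
      rwa [this]
    obtain ⟨S, hS1, hS2⟩ := b_sUnion _ hA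
    obtain ⟨S₀, hS₀, rfl⟩ := Finset.mem_image.1 hS1
    exact hL hS₀ hS2
  obtain ⟨𝔘, h𝔘⟩ := exists_ultra {S | ¬ cp.b (A ∩ S) D} hside
  · have hU : ∀ U ∈ 𝔘, cp.b (A ∩ U) D := by
      intro U hU
      by_contra hb
      exact h𝔘 U hb hU
    have hB : ∀ E ∈ cp.B, E ∉ 𝔘 := by
      intro E hE hEU
      exact not_b_left (cp.isCP.subset_mem E _ hE Set.inter_subset_right) (hU E hEU)
    refine ⟨clusterOf cp 𝔘, clusterOf_mem_UX 𝔘 hB, fun U hUm => ?_, fun U hUm => ?_⟩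
    · left
      rcases Set.eq_empty_or_nonempty (A ∩ U) with he | hne
      · exfalso
        have := (cp.isCP.unbounded_of_rel _ _ (hU U hUm)).1
        obtain ⟨x⟩ := ‹Nonempty X›
        rw [he] at this
        exact this (cp.isCP.subset_mem {x} ∅ (cp.isCP.singleton_mem x) (Set.empty_subset _))
      · exact hne
    · exact Or.inr (b_symm (b_mono_left (hU U hUm) Set.inter_subset_right))

lemma fip [Nonempty X] (𝒜 : Set (Set X))
    (h : ∀ L : Finset (Set X), ↑L ⊆ 𝒜 → ∃ σ ∈ UX cp, ↑L ⊆ σ) :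
    ∃ ρ ∈ UX cp, 𝒜 ⊆ ρ := by
  classical
  have hside : ∀ L : Finset (Set X), ↑L ⊆ ({S | ∃ C ∈ 𝒜, ¬ deltaExt cp C S} ∪ cp.B) →
      ⋃₀ (↑L : Set (Set X)) ≠ Set.univ := by
    intro L hL hun
    have hM : ∃ M : Finset (Set X), ↑M ⊆ 𝒜 ∧
        ∀ S ∈ L, S ∈ cp.B ∨ ∃ C ∈ M, ¬ deltaExt cp C S := by
      clear hun
      induction L using Finset.induction_on with
      | empty => exact ⟨∅, by simp, by simp⟩
      | insert a L hni ih =>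
        obtain ⟨M, hM1, hM2⟩ := ih fun x hx => hL (Finset.mem_insert_of_mem hx)
        rcases hL (Finset.mem_insert_self a L) with ⟨C, hC, hd⟩ | hBa
        · refine ⟨insert C M, ?_, ?_⟩
          · rw [Finset.coe_insert]
            exact Set.insert_subset hC hM1
          · intro S hS
            rcases Finset.mem_insert.1 hS with rfl | hS'
            · exact Or.inr ⟨C, Finset.mem_insert_self C M, hd⟩
            · rcases hM2 S hS' with h' | ⟨C', hC', hd'⟩
              · exact Or.inl h'
              · exact Or.inr ⟨C', Finset.mem_insert_of_mem hC', hd'⟩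
        · refine ⟨M, hM1, fun S hS => ?_⟩
          rcases Finset.mem_insert.1 hS with rfl | hS'
          · exact Or.inl hBa
          · exact hM2 S hS'
    obtain ⟨M, hM1, hM2⟩ := hM
    obtain ⟨σ, hσUX, hMσ⟩ := h M hM1
    have huniv : ⋃₀ ↑L ∈ σ := by
      rw [hun]; exact univ_mem_cluster hσUX.1
    obtain ⟨S, hSL, hSσ⟩ := mem_of_sUnion_mem hσUX.1 (empty_not_mem_cluster hσUX) L huniv
    rcases hM2 S hSL with h' | ⟨C, hCM, hd⟩
    · exact hσUX.2 S hSσ h'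
    · exact hd (hσUX.1.close _ (hMσ hCM) _ hSσ)
  obtain ⟨𝔘, h𝔘⟩ := exists_ultra ({S | ∃ C ∈ 𝒜, ¬ deltaExt cp C S} ∪ cp.B) hside
  · have hB : ∀ E ∈ cp.B, E ∉ 𝔘 := fun E hE => h𝔘 E (Or.inr hE)
    refine ⟨clusterOf cp 𝔘, clusterOf_mem_UX 𝔘 hB, fun C hC U hUm => ?_⟩
    by_contra hd
    exact h𝔘 U (Or.inl ⟨C, hC, hd⟩) hUm

lemma trace_subset_of_sqsub {A B : Set X} (h : sqsub cp A B) :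
    trace cp A ⊆ trace cp B := by
  intro σ hσ
  refine ⟨hσ.1, hσ.1.1.mem_of_close B fun C hC => ?_⟩
  exact Or.inr (h C (cluster_b hσ.1 hσ.2 hC))

lemma sqsub_of_trace_subset [Nonempty X] {A B : Set X}
    (h : trace cp A ⊆ trace cp B) : sqsub cp A B := by
  intro D hD
  obtain ⟨σ, hσUX, hAσ, hDσ⟩ := exists_cluster_pair hD
  exact cluster_b hσUX (h ⟨hσUX, hAσ⟩).2 hDσ

end Aux


/-- `K₁ ⊆ int(K₂)` iff there is `A ∈ N_{K₁}` with `A ⊑ B` for all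
`B ∈ N_{K₂}`. -/
theorem interior_iff_sqsub (cp : CoarseProximity X)
    (K₁ K₂ : Set (Set (Set X))) (hK₁ : IsClosedU cp K₁) (hK₂ : IsClosedU cp K₂) :
    K₁ ⊆ intU cp K₂ ↔ ∃ A ∈ nbhdFilter cp K₁, ∀ B ∈ nbhdFilter cp K₂, sqsub cp A B := by
  classical
  rcases isEmpty_or_nonempty X with hX | hX
  · have hint : ∀ S : Set (Set (Set X)), intU cp S = ∅ := by
      intro S
      rw [Set.eq_empty_iff_forall_notMem]
      rintro σ ⟨hσUX, hncl⟩
      refine hncl ⟨hσUX, fun C _ => ?_⟩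
      obtain ⟨D, hD⟩ := cluster_nonempty hσUX.1
      have hCD : C = D := by rw [Set.eq_empty_of_isEmpty C, Set.eq_empty_of_isEmpty D]
      rwa [hCD]
    constructor
    · intro h
      have hK1e : K₁ = ∅ := by rw [hint K₂] at h; exact Set.subset_empty_iff.1 h
      refine ⟨∅, ?_, fun B _ D hD => ?_⟩
      · show K₁ ⊆ _
        rw [hK1e]; exact Set.empty_subset _
      · have hB : (∅ : Set X) = B := by rw [Set.eq_empty_of_isEmpty B]
        rwa [← hB]
    · rintro ⟨A, hA, _⟩
      have hA' : K₁ ⊆ intU cp (trace cp A) := hA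
      rw [hint] at hA'
      rw [Set.subset_empty_iff.1 hA']
      exact Set.empty_subset _
  · constructor
    · intro h
      have hchoice : ∀ σ ∈ K₁, ∃ A C : Set X,
          A ∈ σ ∧ ¬ deltaExt cp A Cᶜ ∧ trace cp C ⊆ K₂ := by
        intro σ hσ
        obtain ⟨hσUX, hncl⟩ := h hσ
        obtain ⟨G, hGabs, hGσ⟩ : ∃ G : Set X, (∀ τ ∈ UX cp \ K₂, G ∈ τ) ∧ G ∉ σ := by
          by_contra hc; push_neg at hc
          exact hncl ⟨hσUX, fun C hC => hc C hC⟩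
        obtain ⟨A, hAσ, hGA⟩ := exists_mem_not_delta hσUX.1 hGσ
        obtain ⟨C, hC1, hC2⟩ := sep_pair (fun hd' => hGA (delta_symm hd'))
        refine ⟨A, C, hAσ, hC1, fun τ hτ => ?_⟩
        by_contra hτK₂
        exact hC2 (hτ.1.1.close _ hτ.2 _ (hGabs τ ⟨hτ.1, hτK₂⟩))
      choose! A C hA hd htr using hchoice
      by_cases hfin : ∃ F : Finset (Set (Set X)), ↑F ⊆ K₁ ∧
          K₁ ⊆ ⋃ σ ∈ F, intU cp (trace cp (C σ))
      · obtain ⟨F, hFK, hcov⟩ := hfin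
        refine ⟨⋃₀ ↑(F.image C), ?_, ?_⟩
        · intro σ hσ
          obtain ⟨τ, hτF, hσi⟩ := Set.mem_iUnion₂.1 (hcov hσ)
          refine intU_mono (trace_mono ?_) hσi
          exact Set.subset_sUnion_of_mem (Finset.mem_coe.2 (Finset.mem_image_of_mem C hτF))
        · intro B hB
          refine sqsub_of_trace_subset (fun ρ hρ => ?_)
          obtain ⟨S, hSF, hSρ⟩ :=
            mem_of_sUnion_mem hρ.1.1 (empty_not_mem_cluster hρ.1) _ hρ.2
          obtain ⟨τ, hτF, rfl⟩ := Finset.mem_image.1 hSF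
          have hρK₂ : ρ ∈ K₂ := htr τ (hFK hτF) ⟨hρ.1, hSρ⟩
          exact intU_subset (hB hρK₂)
      · exfalso
        push_neg at hfin
        have hside : ∀ L : Finset (Set X),
            ↑L ⊆ ({G | ∀ τ ∈ K₁, G ∈ τ} ∪ (fun σ => (C σ)ᶜ) '' K₁) →
            ∃ σ ∈ UX cp, (↑L : Set (Set X)) ⊆ σ := by
          intro L hL
          have hF : ∃ F : Finset (Set (Set X)), ↑F ⊆ K₁ ∧
              ∀ x ∈ L, (∀ τ ∈ K₁, x ∈ τ) ∨ ∃ σ ∈ F, x = (C σ)ᶜ := by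
            induction L using Finset.induction_on with
            | empty => exact ⟨∅, by simp, by simp⟩
            | insert a L hni ih =>
              obtain ⟨F, hF1, hF2⟩ := ih fun x hx => hL (Finset.mem_insert_of_mem hx)
              rcases hL (Finset.mem_insert_self a L) with habs | ⟨σ, hσK₁, rfl⟩
              · refine ⟨F, hF1, fun x hx => ?_⟩
                rcases Finset.mem_insert.1 hx with rfl | hx'
                · exact Or.inl habs
                · exact hF2 x hx'
              · refine ⟨insert σ F,
                  by rw [Finset.coe_insert]; exact Set.insert_subset hσK₁ hF1,
                  fun x hx => ?_⟩
                rcases Finset.mem_insert.1 hx with rfl | hx'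
                · exact Or.inr ⟨σ, Finset.mem_insert_self σ F, rfl⟩
                · rcases hF2 x hx' with h' | ⟨σ', hσ', rfl⟩
                  · exact Or.inl h'
                  · exact Or.inr ⟨σ', Finset.mem_insert_of_mem hσ', rfl⟩
          obtain ⟨F, hFK, hFL⟩ := hF
          obtain ⟨τ, hτK₁, hτn⟩ : ∃ τ ∈ K₁, ∀ σ ∈ F, τ ∉ intU cp (trace cp (C σ)) := by
            have hns := hfin F hFK
            rw [Set.not_subset] at hns
            obtain ⟨τ, hτ1, hτ2⟩ := hns
            exact ⟨τ, hτ1, fun σ hσF hmem => hτ2 (Set.mem_iUnion₂.2 ⟨σ, hσF, hmem⟩)⟩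
          refine ⟨τ, hK₁.1 hτK₁, fun x hx => ?_⟩
          rcases hFL x hx with habs | ⟨σ, hσF, rfl⟩
          · exact habs τ hτK₁
          · exact compl_mem_of_not_intU (hK₁.1 hτK₁) (hτn σ hσF)
        obtain ⟨ρ, hρUX, hρ𝒜⟩ :=
          fip ({G | ∀ τ ∈ K₁, G ∈ τ} ∪ (fun σ => (C σ)ᶜ) '' K₁) hside
        have hρK₁ : ρ ∈ K₁ := hK₁.2 ⟨hρUX, fun G hG => hρ𝒜 (Or.inl hG)⟩
        have h1 : (C ρ)ᶜ ∈ ρ := hρ𝒜 (Or.inr ⟨ρ, hρK₁, rfl⟩)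
        exact hd ρ hρK₁ (hρUX.1.close _ (hA ρ hρK₁) _ h1)
    · rintro ⟨A, hAN, hsq⟩
      have hAK₂ : trace cp A ⊆ K₂ := by
        intro σ hσ
        by_contra hσK₂
        obtain ⟨Cc, hKint, hCσ⟩ := exists_nbhd_avoid hK₂ hσ.1 hσK₂
        have hmem : Cc ∈ nbhdFilter cp K₂ := hKint
        exact hCσ (trace_subset_of_sqsub (hsq Cc hmem) hσ).2
      intro σ hσ
      exact intU_mono hAK₂ (hAN hσ)
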